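/- arXiv:2309.05578 — 4 statements merged into one kernel-verified Lean document; each statement's English description precedes it below -/
import Mathlib

section
/- Consider a Markov chain on {0,…,N}×{−1,+1} (the NRST index process) with transition kernel: from (i,ε) propose i' = i+ε; if i' ∉ {0,…,N} or the move is rejected (with probability ρ_{i,i+ε}), stay at i and flip ε to −ε; otherwise move to (i+ε, ε). If the acceptance probabilities satisfy α_{i,i+ε} ∈ (0,1] for interior moves, then the uniform distribution π̃(i,ε) = 1/(2(N+1)) is invariant for this kernel whenever ρ_{i−1,i} = ρ_{i,i−1} for all i ∈ {1,…,N}. -/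
open Finset

/-- Invariance of the uniform distribution for the NRST index process: on the state space
`{0,…,N} × {−1,+1}`, with the lifted kernel that proposes `i' = i+ε`, rejects (flipping `ε`)
with probability `ρ_{i,i+ε}` (or deterministically at the boundary), if the rejection
probabilities are symmetric (`ρ_{i−1,i} = ρ_{i,i−1}`) and interior acceptance probabilities
lie in `(0,1]`, then the uniform distribution `π̃(i,ε) = 1/(2(N+1))` is invariant. -/
theorem nrst_index_process_uniform_invariant
    (N : ℕ) (ρ : ℤ → ℤ → ℝ)
    (K : (ℤ × ℤ) → (ℤ × ℤ) → ℝ)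
    (hK : ∀ i ε i' ε' : ℤ,
      K (i, ε) (i', ε') =
        if 0 ≤ i + ε ∧ i + ε ≤ (N : ℤ) then
          (if i' = i + ε ∧ ε' = ε then 1 - ρ i (i + ε)
            else if i' = i ∧ ε' = -ε then ρ i (i + ε) else 0)
        else (if i' = i ∧ ε' = -ε then 1 else 0))
    (hα : ∀ i ε : ℤ, (ε = 1 ∨ ε = -1) → 0 ≤ i → i ≤ (N : ℤ) →
      0 ≤ i + ε → i + ε ≤ (N : ℤ) →
      0 < 1 - ρ i (i + ε) ∧ 1 - ρ i (i + ε) ≤ 1)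
    (hsym : ∀ i : ℤ, 1 ≤ i → i ≤ (N : ℤ) → ρ (i - 1) i = ρ i (i - 1)) :
    ∀ i' ∈ Finset.Icc (0 : ℤ) (N : ℤ), ∀ ε' ∈ ({-1, 1} : Finset ℤ),
      (∑ i ∈ Finset.Icc (0 : ℤ) (N : ℤ), ∑ ε ∈ ({-1, 1} : Finset ℤ),
          (1 / (2 * ((N : ℝ) + 1))) * K (i, ε) (i', ε'))
        = 1 / (2 * ((N : ℝ) + 1)) := by
  intro i' hi' ε' hε'
  have hi'' := Finset.mem_Icc.mp hi'
  have hsum : (∑ i ∈ Finset.Icc (0 : ℤ) (N : ℤ), ∑ ε ∈ ({-1, 1} : Finset ℤ),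
      K (i, ε) (i', ε')) = 1 := by
    have hpair : ∀ i ∈ Finset.Icc (0 : ℤ) (N : ℤ),
        (∑ ε ∈ ({-1, 1} : Finset ℤ), K (i, ε) (i', ε'))
        = K (i, -1) (i', ε') + K (i, 1) (i', ε') :=
      fun i _ => Finset.sum_pair (by norm_num)
    rw [Finset.sum_congr rfl hpair]
    rcases Finset.mem_insert.mp hε' with h | h
    · -- ε' = -1
      subst h
      have hterm : ∀ i ∈ Finset.Icc (0 : ℤ) (N : ℤ),
          K (i, -1) (i', -1) + K (i, 1) (i', -1)
          = (if i = i' + 1 then 1 - ρ (i'+1) i' else 0)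
            + (if i = i' then (if i' + 1 ≤ (N:ℤ) then ρ i' (i'+1) else 1) else 0) := by
        intro i hi
        have hi2 := Finset.mem_Icc.mp hi
        rw [hK, hK]
        split_ifs <;>
          first
            | rfl | omega
            | (congr 1 <;> omega) | (congr 2 <;> omega) | (congr 3 <;> omega)
            | (congr 4 <;> omega)
            | exact (‹_ ∧ False›.2).elim
            | (simp only [zero_add, add_zero]
               all_goals (first | rfl | (congr 1 <;> omega) | (congr 2 <;> omega) | (congr 3 <;> omega)))
      rw [Finset.sum_congr rfl hterm, Finset.sum_add_distrib,
        Finset.sum_ite_eq' (Finset.Icc (0:ℤ) (N:ℤ)) (i'+1),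
        Finset.sum_ite_eq' (Finset.Icc (0:ℤ) (N:ℤ)) i']
      rw [if_pos hi']
      by_cases hb : i' + 1 ≤ (N:ℤ)
      · rw [if_pos (Finset.mem_Icc.mpr ⟨by omega, hb⟩), if_pos hb]
        have := hsym (i' + 1) (by omega) hb
        simp only [add_sub_cancel_right] at this
        linarith
      · rw [if_neg (by simp only [Finset.mem_Icc]; omega), if_neg hb]
        norm_num
    · -- ε' = 1
      rw [Finset.mem_singleton] at h
      subst h
      have hterm : ∀ i ∈ Finset.Icc (0 : ℤ) (N : ℤ),
          K (i, -1) (i', 1) + K (i, 1) (i', 1)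
          = (if i = i' - 1 then 1 - ρ (i'-1) i' else 0)
            + (if i = i' then (if 1 ≤ i' then ρ i' (i'-1) else 1) else 0) := by
        intro i hi
        have hi2 := Finset.mem_Icc.mp hi
        rw [hK, hK]
        split_ifs <;>
          first
            | rfl | omega
            | (congr 1 <;> omega) | (congr 2 <;> omega) | (congr 3 <;> omega)
            | (congr 4 <;> omega)
            | exact (‹_ ∧ False›.2).elim
            | (simp only [zero_add, add_zero]
               all_goals (first | rfl | (congr 1 <;> omega) | (congr 2 <;> omega) | (congr 3 <;> omega)))
      rw [Finset.sum_congr rfl hterm, Finset.sum_add_distrib,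
        Finset.sum_ite_eq' (Finset.Icc (0:ℤ) (N:ℤ)) (i'-1),
        Finset.sum_ite_eq' (Finset.Icc (0:ℤ) (N:ℤ)) i']
      rw [if_pos hi']
      by_cases hb : 1 ≤ i'
      · rw [if_pos (Finset.mem_Icc.mpr ⟨by omega, by omega⟩), if_pos hb]
        have := hsym i' hb hi''.2
        linarith
      · rw [if_neg (by simp only [Finset.mem_Icc]; omega), if_neg hb]
        norm_num
  have hfact : (∑ i ∈ Finset.Icc (0 : ℤ) (N : ℤ), ∑ ε ∈ ({-1, 1} : Finset ℤ),
        (1 / (2 * ((N : ℝ) + 1))) * K (i, ε) (i', ε'))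
      = (1 / (2 * ((N : ℝ) + 1))) * ∑ i ∈ Finset.Icc (0 : ℤ) (N : ℤ),
          ∑ ε ∈ ({-1, 1} : Finset ℤ), K (i, ε) (i', ε') := by
    rw [Finset.mul_sum]
    exact Finset.sum_congr rfl fun i _ => (Finset.mul_sum _ _ _).symm
  rw [hfact, hsum, mul_one]
end

section
/- Consider a regenerative process with i.i.d. tours, where v is the number of visits to the top level per tour and h is any measurable function with |h| ≤ 1. Let σ(h)² = E[s(𝟙{i=N}(h(x) − π(h)))²] / E[s(𝟙{i=N})]², where s(f) denotes the tour sum of f. Then |s(𝟙{i=N}(h(x) − π(h)))| ≤ 2v pointwise, and consequently sup_{|h|≤1} σ(h)² ≤ 4·E[v²]/E[v]² = 4/TE, where TE = E[v]²/E[v²]. -/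
open MeasureTheory Finset

/-- Tour effectiveness bounds the asymptotic variance for bounded test functions: with `v`
the number of top-level visits per tour and `s` the centered tour sum for a test function
`|h| ≤ 1` (and `|π(h)| ≤ 1`), one has `|s| ≤ 2v` pointwise, and hence
`σ(h)² = E[s²]/E[v]² ≤ 4 E[v²]/E[v]² = 4/TE`. -/
theorem tour_effectiveness_variance_bound
    {Ω 𝒳 : Type*} [MeasurableSpace Ω] (P : Measure Ω) [IsProbabilityMeasure P]
    (N : ℕ) (τ : Ω → ℕ) (X : Ω → ℕ → 𝒳) (I : Ω → ℕ → ℕ)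
    (v : Ω → ℝ)
    (hvdef : ∀ ω, v ω = ∑ n ∈ Finset.range (τ ω), if I ω n = N then (1 : ℝ) else 0)
    (hv2 : Integrable (fun ω => (v ω) ^ 2) P)
    (hvpos : 0 < ∫ ω, v ω ∂P)
    (h : 𝒳 → ℝ) (hb : ∀ x, |h x| ≤ 1) (πh : ℝ) (hπ : |πh| ≤ 1)
    (s : Ω → ℝ)
    (hsdef : ∀ ω, s ω = ∑ n ∈ Finset.range (τ ω),
        if I ω n = N then (h (X ω n) - πh) else 0)
    (hsm : AEStronglyMeasurable s P) :
    (∀ ω, |s ω| ≤ 2 * v ω) ∧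
    (∫ ω, (s ω) ^ 2 ∂P) / (∫ ω, v ω ∂P) ^ 2 ≤
      4 * (∫ ω, (v ω) ^ 2 ∂P) / (∫ ω, v ω ∂P) ^ 2 := by
  have key : ∀ ω, |s ω| ≤ 2 * v ω := by
    intro ω
    rw [hsdef, hvdef]
    calc |∑ n ∈ Finset.range (τ ω), if I ω n = N then (h (X ω n) - πh) else 0|
        ≤ ∑ n ∈ Finset.range (τ ω), |if I ω n = N then (h (X ω n) - πh) else 0| :=
          Finset.abs_sum_le_sum_abs _ _
      _ ≤ ∑ n ∈ Finset.range (τ ω), 2 * (if I ω n = N then (1:ℝ) else 0) := by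
          apply Finset.sum_le_sum
          intro n _
          by_cases hI : I ω n = N
          · simp only [hI, if_true, mul_one]
            calc |h (X ω n) - πh| ≤ |h (X ω n)| + |πh| := abs_sub _ _
              _ ≤ 1 + 1 := add_le_add (hb _) hπ
              _ = 2 := by norm_num
          · simp [hI]
      _ = 2 * ∑ n ∈ Finset.range (τ ω), (if I ω n = N then (1:ℝ) else 0) := by
          rw [Finset.mul_sum]
  refine ⟨key, ?_⟩
  have hsq : ∀ ω, (s ω)^2 ≤ 4 * (v ω)^2 := by
    intro ω
    have h1 : |s ω| ≤ 2 * v ω := key ω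
    have h2 : (s ω)^2 = |s ω|^2 := (sq_abs _).symm
    rw [h2]
    have : |s ω|^2 ≤ (2 * v ω)^2 := pow_le_pow_left₀ (abs_nonneg _) h1 2
    calc |s ω|^2 ≤ (2 * v ω)^2 := this
      _ = 4 * (v ω)^2 := by ring
  have hint : ∫ ω, (s ω)^2 ∂P ≤ ∫ ω, 4 * (v ω)^2 ∂P := by
    apply integral_mono_of_nonneg
    · filter_upwards with ω using sq_nonneg _
    · exact hv2.const_mul 4
    · filter_upwards with ω using hsq ω
  rw [integral_const_mul] at hint
  have hden : (0:ℝ) < (∫ ω, v ω ∂P)^2 := pow_pos hvpos 2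
  rw [div_le_div_iff₀ hden hden] at *
  nlinarith [sq_nonneg (∫ ω, v ω ∂P)]
end

section
/- Let Λ > 0 and for N > Λ define the cost-per-effectiveness ratio G(N) = 2(N+1)(N(1+2Λ) − Λ)/(N − Λ) (expected tour length 2(N+1) divided by TE = (N−Λ)/(N(1+2Λ)−Λ) under equi-rejection with ρ = Λ/N). Then G is minimized over real N > Λ at N⋆ = Λ(1 + √(1 + 1/(1+2Λ))), and N⋆ satisfies 2Λ < N⋆ < (1 + √2)Λ. -/
/-- Optimal grid size: for `Λ > 0`, the cost-per-effectiveness ratio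
`G(N) = 2(N+1)(N(1+2Λ)−Λ)/(N−Λ)` over real `N > Λ` is minimized uniquely at
`N⋆ = Λ(1 + √(1 + 1/(1+2Λ)))`, and `2Λ < N⋆ < (1+√2)Λ`. -/
theorem optimal_grid_size
    (Λ : ℝ) (hΛ : 0 < Λ) :
    let G : ℝ → ℝ := fun t => 2 * (t + 1) * (t * (1 + 2 * Λ) - Λ) / (t - Λ)
    let Nstar : ℝ := Λ * (1 + Real.sqrt (1 + 1 / (1 + 2 * Λ)))
    (∀ t : ℝ, Λ < t → G Nstar ≤ G t) ∧
    (∀ t : ℝ, Λ < t → G t = G Nstar → t = Nstar) ∧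
    2 * Λ < Nstar ∧ Nstar < (1 + Real.sqrt 2) * Λ := by
  intro G Nstar
  set a : ℝ := 1 + 2 * Λ with ha_def
  have ha : (0:ℝ) < a := by positivity
  have ha1 : (1:ℝ) < a := by simp only [ha_def]; linarith
  set s : ℝ := Real.sqrt (1 + 1 / a) with hs_def
  have harg : (0:ℝ) < 1 + 1 / a := by positivity
  have hs0 : 0 < s := Real.sqrt_pos.2 harg
  have hs2 : s ^ 2 = 1 + 1 / a := Real.sq_sqrt harg.le
  have hs1 : 1 < s := by
    nlinarith [one_div_pos.2 ha]
  have hslt : s < Real.sqrt 2 := by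
    have h2 : 1 + 1 / a < 2 := by
      have : 1 / a < 1 := by
        rw [div_lt_one ha]; exact ha1
      linarith
    rw [hs_def]
    exact Real.sqrt_lt_sqrt harg.le h2
  have hN_def : Nstar = Λ + Λ * s := by simp only [Nstar]; ring
  -- key algebraic facts
  set u₀ : ℝ := Λ * s with hu0_def
  have hu0 : 0 < u₀ := by positivity
  have hK : 4 * Λ ^ 2 * (Λ + 1) = 2 * a * u₀ ^ 2 := by
    have has2 : a * s ^ 2 = a + 1 := by
      rw [hs2]; field_simp
    simp only [hu0_def]
    nlinarith [has2]
  have hGform : ∀ v : ℝ, v ≠ 0 →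
      G (Λ + v) = 2 * a * v + 2 * (2 * Λ ^ 2 + a * (Λ + 1)) + 4 * Λ ^ 2 * (Λ + 1) / v := by
    intro v hv
    simp only [G, ← ha_def]
    have : Λ + v - Λ = v := by ring
    rw [this]
    field_simp
    ring
  have hGN : G Nstar = 4 * a * u₀ + 2 * (2 * Λ ^ 2 + a * (Λ + 1)) := by
    rw [hN_def, hGform u₀ hu0.ne', hK]
    field_simp
    ring
  have hGt : ∀ t : ℝ, Λ < t →
      G t - G Nstar = 2 * a * (t - Λ - u₀) ^ 2 / (t - Λ) := by
    intro t ht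
    have hu : (0:ℝ) < t - Λ := by linarith
    have h1 : G t = G (Λ + (t - Λ)) := by norm_num
    rw [h1, hGform (t - Λ) hu.ne', hGN, hK]
    field_simp
    ring
  refine ⟨?_, ?_, ?_, ?_⟩
  · intro t ht
    have h := hGt t ht
    have hu : (0:ℝ) < t - Λ := by linarith
    nlinarith [sq_nonneg (t - Λ - u₀), div_nonneg (by positivity : (0:ℝ) ≤ 2 * a * (t - Λ - u₀) ^ 2) hu.le]
  · intro t ht heq
    have h := hGt t ht
    rw [heq, sub_self] at h
    have hu : (0:ℝ) < t - Λ := by linarith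
    have h2 : 2 * a * (t - Λ - u₀) ^ 2 = 0 := by
      rcases div_eq_zero_iff.1 h.symm with h' | h'
      · exact h'
      · exact absurd h' hu.ne'
    have h3 : t - Λ - u₀ = 0 := by
      rcases mul_eq_zero.1 h2 with h' | h'
      · linarith
      · exact pow_eq_zero_iff two_ne_zero |>.1 h'
    rw [hN_def]
    simp only [hu0_def] at h3
    linarith
  · rw [hN_def]
    nlinarith
  · rw [hN_def]
    nlinarith
end

section
/- Let c be differentiable on (0,1), and for 0 < β, β' < 1 with Δβ = β' − β, β̄ = (β+β')/2, let α_{β,β'} = E_{π^{(β)}}[exp(−max{0, Δβ·V − (c(β')−c(β))})] be the average tempering acceptance probability. Then α_{β,β'} = E_{π^{(β̄)}}[exp(−|Δβ|·|c'(β̌) − V|/2)] / E_{π^{(β̄)}}[exp(−Δβ·(c'(β̌) − V)/2)], where β̌ between β and β' satisfies c'(β̌) = (c(β') − c(β))/Δβ (mean value theorem); in particular α_{β,β'} ≤ 1. -/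
open MeasureTheory Real Set

/-!
Write `Δ = β' − β`, `β̄ = (β + β')/2` and `D = c(β') − c(β) = Δ c'(β̌)`. Pointwise, with
`max{0,u} = (u + |u|)/2` and `u = ΔV − D`, the acceptance weight splits as
`e^{−max{0,u}} e^{−βV} = e^{D/2} e^{−|Δ||c'(β̌) − V|/2} e^{−β̄V}`, while
`e^{−Δ(c'(β̌) − V)/2} e^{−β̄V} = e^{−D/2} e^{−βV}`. Integrating (the factors `Z(β̄)⁻¹` cancel),
the numerator of the ratio is `e^{−D/2}` times the unnormalised acceptance probability
and its denominator is `e^{−D/2} Z(β)`. The bound `α ≤ 1` is `e^{−max{0,u}} ≤ 1`.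
-/

namespace AcceptanceProbability

lemma max_zero_eq_half_add_abs (u : ℝ) : max 0 u = (u + |u|) / 2 := by
  rcases le_total 0 u with h | h
  · rw [max_eq_right h, abs_of_nonneg h]; ring
  · rw [max_eq_left h, abs_of_nonpos h]; ring

lemma exp_neg_max_mul_exp_eq (β β' d v : ℝ) :
    exp (-(max 0 ((β' - β) * v - (β' - β) * d))) * exp (-β * v)
      = exp ((β' - β) * d / 2) *
          (exp (-(|β' - β| * |d - v|) / 2) * exp (-((β + β') / 2) * v)) := by
  have habs : |β' - β| * |d - v| = |(β' - β) * v - (β' - β) * d| := by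
    rw [← abs_mul, ← abs_neg]; ring_nf
  rw [habs, max_zero_eq_half_add_abs, ← exp_add, ← exp_add, ← exp_add]
  ring_nf

lemma exp_neg_mul_sub_mul_exp_eq (β β' d v : ℝ) :
    exp (-((β' - β) * (d - v)) / 2) * exp (-((β + β') / 2) * v)
      = exp (-((β' - β) * d) / 2) * exp (-β * v) := by
  rw [← exp_add, ← exp_add]
  ring_nf

variable {𝒳 : Type*} [MeasurableSpace 𝒳] (μ : Measure 𝒳) (V : 𝒳 → ℝ) (β β' d : ℝ)

lemma integral_exp_neg_max_mul_exp_eq :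
    ∫ x, exp (-(max 0 ((β' - β) * V x - (β' - β) * d))) * exp (-β * V x) ∂μ
      = exp ((β' - β) * d / 2) *
          ∫ x, exp (-(|β' - β| * |d - V x|) / 2) * exp (-((β + β') / 2) * V x) ∂μ := by
  rw [← integral_const_mul]
  simp only [exp_neg_max_mul_exp_eq]

lemma integral_exp_neg_mul_sub_mul_exp_eq :
    ∫ x, exp (-((β' - β) * (d - V x)) / 2) * exp (-((β + β') / 2) * V x) ∂μ
      = exp (-((β' - β) * d) / 2) * ∫ x, exp (-β * V x) ∂μ := by
  rw [← integral_const_mul]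
  simp only [exp_neg_mul_sub_mul_exp_eq]

lemma integral_exp_neg_max_mul_le {f g : 𝒳 → ℝ} (hg : Integrable g μ) (hg_nonneg : 0 ≤ g) :
    ∫ x, exp (-(max 0 (f x))) * g x ∂μ ≤ ∫ x, g x ∂μ := by
  refine integral_mono_of_nonneg (.of_forall fun x => ?_) hg (.of_forall fun x => ?_)
  · exact mul_nonneg (exp_nonneg _) (hg_nonneg x)
  · have : exp (-(max 0 (f x))) ≤ 1 := exp_le_one_iff.mpr (by simp)
    simpa using mul_le_mul_of_nonneg_right this (hg_nonneg x)

end AcceptanceProbability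

open AcceptanceProbability in
theorem acceptance_probability_ratio_representation_general
    {𝒳 : Type*} [MeasurableSpace 𝒳] (μ : Measure 𝒳) [IsProbabilityMeasure μ]
    (V : 𝒳 → ℝ)
    (hint : ∀ b ∈ Set.Icc (0 : ℝ) 1, Integrable (fun x => Real.exp (-b * V x)) μ)
    (Z : ℝ → ℝ) (hZdef : ∀ b : ℝ, Z b = ∫ x, Real.exp (-b * V x) ∂μ)
    (c : ℝ → ℝ)
    (β β' : ℝ) (hβ : β ∈ Set.Ioo (0 : ℝ) 1) (hβ' : β' ∈ Set.Ioo (0 : ℝ) 1)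
    (hne : β ≠ β') :
    ∀ βc : ℝ, βc ∈ Set.Ioo (min β β') (max β β') →
      deriv c βc = (c β' - c β) / (β' - β) →
      ((Z β)⁻¹ *
          ∫ x, Real.exp (-(max 0 ((β' - β) * V x - (c β' - c β)))) *
            Real.exp (-β * V x) ∂μ)
        = ((Z ((β + β') / 2))⁻¹ *
              ∫ x, Real.exp (-(|β' - β| * |deriv c βc - V x|) / 2) *
                Real.exp (-((β + β') / 2) * V x) ∂μ) /
          ((Z ((β + β') / 2))⁻¹ *
              ∫ x, Real.exp (-((β' - β) * (deriv c βc - V x)) / 2) *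
                Real.exp (-((β + β') / 2) * V x) ∂μ) ∧
      ((Z β)⁻¹ *
          ∫ x, Real.exp (-(max 0 ((β' - β) * V x - (c β' - c β)))) *
            Real.exp (-β * V x) ∂μ) ≤ 1 := by
  intro βc _ hderiv
  have hD : (β' - β) * deriv c βc = c β' - c β := by
    rw [hderiv, mul_div_cancel₀ _ (sub_ne_zero.mpr hne.symm)]
  have hZ_mid : Z ((β + β') / 2) ≠ 0 := by
    rw [hZdef]
    exact (integral_exp_pos (hint _ ⟨by linarith [hβ.1, hβ'.1], by linarith [hβ.2, hβ'.2]⟩)).ne'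
  have hintβ := hint β ⟨hβ.1.le, hβ.2.le⟩
  rw [← hD, integral_exp_neg_max_mul_exp_eq, integral_exp_neg_mul_sub_mul_exp_eq, ← hZdef]
  refine ⟨?_, ?_⟩
  · rw [mul_div_mul_left _ _ (inv_ne_zero hZ_mid), neg_div, exp_neg]
    simp only [div_eq_mul_inv, mul_inv, inv_inv]
    ring
  · rw [← integral_exp_neg_max_mul_exp_eq, hZdef]
    exact inv_mul_le_one_of_le₀ (integral_exp_neg_max_mul_le μ hintβ fun x => (exp_pos _).le)
      (integral_nonneg fun x => (exp_pos _).le)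

/-- Ratio representation of the average tempering acceptance probability: for differentiable
`c` on `(0,1)` and `β ≠ β'` in `(0,1)`, with `Δβ = β' − β`, `β̄ = (β+β')/2`, and any `β̌`
strictly between `β` and `β'` with `c'(β̌) = (c(β')−c(β))/Δβ` (mean value theorem),
`α_{β,β'} = E_{π^{(β̄)}}[e^{−|Δβ||c'(β̌)−V|/2}] / E_{π^{(β̄)}}[e^{−Δβ(c'(β̌)−V)/2}]`,
and in particular `α_{β,β'} ≤ 1`. Expectations under `π^{(b)}` are written as
`Z(b)⁻¹ ∫ f(V) e^{−bV} dμ`. -/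
theorem acceptance_probability_ratio_representation
    {𝒳 : Type*} [MeasurableSpace 𝒳] (μ : Measure 𝒳) [IsProbabilityMeasure μ]
    (V : 𝒳 → ℝ) (hV : Measurable V)
    (hint : ∀ b ∈ Set.Icc (0 : ℝ) 1, Integrable (fun x => Real.exp (-b * V x)) μ)
    (Z : ℝ → ℝ) (hZdef : ∀ b : ℝ, Z b = ∫ x, Real.exp (-b * V x) ∂μ)
    (c : ℝ → ℝ) (hc : DifferentiableOn ℝ c (Set.Ioo 0 1))
    (β β' : ℝ) (hβ : β ∈ Set.Ioo (0 : ℝ) 1) (hβ' : β' ∈ Set.Ioo (0 : ℝ) 1)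
    (hne : β ≠ β') :
    ∀ βc : ℝ, βc ∈ Set.Ioo (min β β') (max β β') →
      deriv c βc = (c β' - c β) / (β' - β) →
      ((Z β)⁻¹ *
          ∫ x, Real.exp (-(max 0 ((β' - β) * V x - (c β' - c β)))) *
            Real.exp (-β * V x) ∂μ)
        = ((Z ((β + β') / 2))⁻¹ *
              ∫ x, Real.exp (-(|β' - β| * |deriv c βc - V x|) / 2) *
                Real.exp (-((β + β') / 2) * V x) ∂μ) /
          ((Z ((β + β') / 2))⁻¹ *
              ∫ x, Real.exp (-((β' - β) * (deriv c βc - V x)) / 2) *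
                Real.exp (-((β + β') / 2) * V x) ∂μ) ∧
      ((Z β)⁻¹ *
          ∫ x, Real.exp (-(max 0 ((β' - β) * V x - (c β' - c β)))) *
            Real.exp (-β * V x) ∂μ) ≤ 1 :=
  acceptance_probability_ratio_representation_general μ V hint Z hZdef c β β' hβ hβ' hne
end
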